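/- arXiv:1602.07362 — 4 statements merged into one kernel-verified Lean document; each statement's English description precedes it below -/
import Mathlib

section
/- If s is a strictly proper scoring rule with range in [0,1] and α > 0, then for each bettor i with wager m_i > 0, the expected profit E_{ω∼p*}[m_i(α·s(p_i,ω) - (Σ_j m_j α·s(p_j,ω))/(Σ_j m_j))] with fixed reports of others is uniquely maximized over p_i at p_i = p*, provided m_i < Σ_j m_j. -/
/-!
Holding the other reports fixed, bettor `i`'s own report enters the weighted average score with
weight `m i / M`, where `M = ∑ j, m j`. Her profit in each outcome is therefore
`m i * (1 - m i / M) * (α * s p_i ω)` minus a term not depending on `p_i`, so her expected profit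
is a positive multiple (as `m i < M`) of her expected score plus a constant, and strict propriety
of `s` makes `p*` its unique maximizer.
-/

open Finset Function

lemma sum_mul_apply_update {ι β : Type*} [Fintype ι] [DecidableEq ι]
    (m : ι → ℝ) (σ : β → ℝ) (p : ι → β) (i : ι) (x : β) :
    ∑ j, m j * σ (update p i x j) = m i * σ x + ∑ j ∈ univ.erase i, m j * σ (p j) := by
  rw [← add_sum_erase _ _ (mem_univ i), update_self]
  congr 1
  exact sum_congr rfl fun j hj => by rw [update_of_ne (ne_of_mem_erase hj)]

lemma wager_profit_update_eq {ι β : Type*} [Fintype ι] [DecidableEq ι]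
    (m : ι → ℝ) (σ : β → ℝ) (p : ι → β) (i : ι) (x : β) (hM : ∑ j, m j ≠ 0) :
    m i * (σ x - (∑ j, m j * σ (update p i x j)) / ∑ j, m j)
      = m i * (1 - m i / ∑ j, m j) * σ x
        - m i * (∑ j ∈ univ.erase i, m j * σ (p j)) / ∑ j, m j := by
  rw [sum_mul_apply_update]
  field_simp
  ring

lemma expectation_affine_lt {q c K₁ K₀ a₁ a₀ b₁ b₀ : ℝ} (hc : 0 < c)
    (h : q * b₁ + (1 - q) * b₀ < q * a₁ + (1 - q) * a₀) :
    q * (c * b₁ - K₁) + (1 - q) * (c * b₀ - K₀) < q * (c * a₁ - K₁) + (1 - q) * (c * a₀ - K₀) := by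
  linear_combination c * h

theorem wswm_truthful_general
    (n : ℕ) (m : Fin n → ℝ) (p : Fin n → ℝ) (i : Fin n)
    (s : ℝ → Bool → ℝ) (α pstar : ℝ) (hα : 0 < α)
    (hproper : ∀ p' q', p' ∈ Set.Icc (0:ℝ) 1 → q' ∈ Set.Icc (0:ℝ) 1 → p' ≠ q' →
      p' * s p' true + (1 - p') * s p' false > p' * s q' true + (1 - p') * s q' false)
    (hmi : 0 < m i) (hmlt : m i < ∑ j, m j)
    (hpstar : pstar ∈ Set.Icc (0:ℝ) 1) :
    ∀ r ∈ Set.Icc (0:ℝ) 1, r ≠ pstar →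
      (pstar * (m i * (α * s pstar true -
          (∑ j, m j * (α * s (Function.update p i pstar j) true)) / (∑ j, m j)))
        + (1 - pstar) * (m i * (α * s pstar false -
          (∑ j, m j * (α * s (Function.update p i pstar j) false)) / (∑ j, m j))))
      >
      (pstar * (m i * (α * s r true -
          (∑ j, m j * (α * s (Function.update p i r j) true)) / (∑ j, m j)))
        + (1 - pstar) * (m i * (α * s r false -
          (∑ j, m j * (α * s (Function.update p i r j) false)) / (∑ j, m j)))) := by
  intro r hr hne
  have hM : 0 < ∑ j, m j := hmi.trans hmlt
  have hweight : 0 < m i * (1 - m i / ∑ j, m j) :=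
    mul_pos hmi (sub_pos.mpr ((div_lt_one hM).mpr hmlt))
  have hscore : pstar * (α * s r true) + (1 - pstar) * (α * s r false)
      < pstar * (α * s pstar true) + (1 - pstar) * (α * s pstar false) := by
    linear_combination α * hproper pstar r hpstar hr (Ne.symm hne)
  simp only [wager_profit_update_eq m (fun y => α * s y true) p i _ hM.ne',
    wager_profit_update_eq m (fun y => α * s y false) p i _ hM.ne']
  exact expectation_affine_lt hweight hscore

/-- Truthfulness: with a strictly proper scoring rule `s` and `α > 0`, bettor `i`'s
expected profit under the (scaled) weighted score wagering mechanism is uniquely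
maximized by reporting her true belief `p*`. -/
theorem wswm_truthful
    (n : ℕ) (m : Fin n → ℝ) (p : Fin n → ℝ) (i : Fin n)
    (s : ℝ → Bool → ℝ) (α pstar : ℝ) (hα : 0 < α)
    (hproper : ∀ p' q', p' ∈ Set.Icc (0:ℝ) 1 → q' ∈ Set.Icc (0:ℝ) 1 → p' ≠ q' →
      p' * s p' true + (1 - p') * s p' false > p' * s q' true + (1 - p') * s q' false)
    (hrange : ∀ q' ω, s q' ω ∈ Set.Icc (0:ℝ) 1)
    (hm : ∀ j, 0 ≤ m j) (hmi : 0 < m i) (hmlt : m i < ∑ j, m j)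
    (hpstar : pstar ∈ Set.Icc (0:ℝ) 1) :
    ∀ r ∈ Set.Icc (0:ℝ) 1, r ≠ pstar →
      (pstar * (m i * (α * s pstar true -
          (∑ j, m j * (α * s (Function.update p i pstar j) true)) / (∑ j, m j)))
        + (1 - pstar) * (m i * (α * s pstar false -
          (∑ j, m j * (α * s (Function.update p i pstar j) false)) / (∑ j, m j))))
      >
      (pstar * (m i * (α * s r true -
          (∑ j, m j * (α * s (Function.update p i r j) true)) / (∑ j, m j)))
        + (1 - pstar) * (m i * (α * s r false -
          (∑ j, m j * (α * s (Function.update p i r j) false)) / (∑ j, m j)))) :=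
  wswm_truthful_general n m p i s α pstar hα hproper hmi hmlt hpstar
end

section
/- For a convex differentiable function C : ℝ → ℝ and reals q*, q, x such that (x ≤ 0 implies q + x ≥ q*) and (x ≥ 0 implies q + x ≤ q*), one has C'(q*)·x - C(q + x) + C(q) ≥ 0. -/
/-!
Secant slopes of a convex function are monotone in each endpoint, and `f' p` lies between the
secant slopes to the left and to the right of `p`. So when `b` lies between `a` and `p`, the slope
over `[a, b]` lies on the same side of `f' p` as the slope between `a` and `p`, which says
`f b - f a ≤ f' p · (b - a)`. Take `a = q`, `b = q + x`, `p = q*`.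
-/

namespace ConvexOn

variable {S : Set ℝ} {f : ℝ → ℝ} {a b p : ℝ}

theorem slope_le_deriv_of_lt_of_le (hf : ConvexOn ℝ S f) (ha : a ∈ S) (hb : b ∈ S) (hp : p ∈ S)
    (hab : a < b) (hbp : b ≤ p) (hfp : DifferentiableAt ℝ f p) :
    slope f a b ≤ deriv f p :=
  (hf.slope_mono ha ⟨hb, hab.ne'⟩ ⟨hp, (hab.trans_le hbp).ne'⟩ hbp).trans
    (hf.slope_le_deriv ha hp (hab.trans_le hbp) hfp)

theorem deriv_le_slope_of_le_of_lt (hf : ConvexOn ℝ S f) (ha : a ∈ S) (hb : b ∈ S) (hp : p ∈ S)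
    (hpb : p ≤ b) (hba : b < a) (hfp : DifferentiableAt ℝ f p) :
    deriv f p ≤ slope f b a := by
  have hpa : p < a := hpb.trans_lt hba
  calc deriv f p ≤ slope f p a := hf.deriv_le_slope hp ha hpa hfp
    _ = slope f a p := slope_comm f p a
    _ ≤ slope f a b := hf.slope_mono ha ⟨hp, hpa.ne⟩ ⟨hb, hba.ne⟩ hpb
    _ = slope f b a := slope_comm f a b

theorem sub_le_deriv_mul_sub_of_le_of_le (hf : ConvexOn ℝ S f) (ha : a ∈ S) (hb : b ∈ S)
    (hp : p ∈ S) (hab : a ≤ b) (hbp : b ≤ p) (hfp : DifferentiableAt ℝ f p) :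
    f b - f a ≤ deriv f p * (b - a) := by
  obtain rfl | hab := hab.eq_or_lt
  · simp
  have h := hf.slope_le_deriv_of_lt_of_le ha hb hp hab hbp hfp
  rwa [slope_def_field, div_le_iff₀ (sub_pos.2 hab)] at h

theorem sub_le_deriv_mul_sub_of_ge_of_ge (hf : ConvexOn ℝ S f) (ha : a ∈ S) (hb : b ∈ S)
    (hp : p ∈ S) (hpb : p ≤ b) (hba : b ≤ a) (hfp : DifferentiableAt ℝ f p) :
    f b - f a ≤ deriv f p * (b - a) := by
  obtain rfl | hba := hba.eq_or_lt
  · simp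
  have h := hf.deriv_le_slope_of_le_of_lt ha hb hp hpb hba hfp
  rw [slope_def_field, le_div_iff₀ (sub_pos.2 hba)] at h
  linarith

end ConvexOn

/-- Trading toward the target state yields non-negative expected profit:
for convex differentiable `C`, if the trade `x` does not cross `q*`,
then `C'(q*)·x - C(q+x) + C(q) ≥ 0`. -/
theorem profitable_trade_nonneg (C : ℝ → ℝ)
    (hconv : ConvexOn ℝ Set.univ C) (hdiff : Differentiable ℝ C)
    (qstar q x : ℝ)
    (hneg : x ≤ 0 → q + x ≥ qstar) (hpos : x ≥ 0 → q + x ≤ qstar) :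
    deriv C qstar * x - C (q + x) + C q ≥ 0 := by
  have bound : C (q + x) - C q ≤ deriv C qstar * (q + x - q) := by
    rcases le_total 0 x with hx | hx
    · exact hconv.sub_le_deriv_mul_sub_of_le_of_le trivial trivial trivial
        (le_add_of_nonneg_right hx) (hpos hx) (hdiff qstar)
    · exact hconv.sub_le_deriv_mul_sub_of_ge_of_ge trivial trivial trivial
        (hneg hx) (add_le_of_nonpos_right hx) (hdiff qstar)
  rw [add_sub_cancel_left] at bound
  linarith
end

section
/- Let q* ∈ ℝ, γ > 0, and let C be convex and differentiable. If q' ≥ q* + γ and x satisfies x ≤ -γ and q' + x ≥ q*, then C'(q*)·x - C(q' + x) + C(q') ≥ D_C(q* + γ, q*), where D_C is the Bregman divergence of C. -/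
/-! Put `m = C'(q*)`, `a = q' + x` and `b = q'`. Both sides are increments of `C` minus the
tangent slope `m` times the step: the left side over `[a, b]`, the right side over `[q*, q* + γ]`.
For a convex function the secant slope grows with both endpoints and dominates the derivative
at its left endpoint, so the slope over `[a, b]` exceeds that over `[q*, q* + γ]`, which
exceeds `m`; and the step `b - a = -x` is at least `γ`. -/

section

variable {𝕜 : Type*} [Field 𝕜] [LinearOrder 𝕜] [IsStrictOrderedRing 𝕜]
  {s : Set 𝕜} {f : 𝕜 → 𝕜} {x₁ y₁ x₂ y₂ : 𝕜}

lemma ConvexOn.slope_le_slope (hf : ConvexOn 𝕜 s f) (hx₁ : x₁ ∈ s) (hy₁ : y₁ ∈ s)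
    (hx₂ : x₂ ∈ s) (hy₂ : y₂ ∈ s) (hx : x₁ ≤ x₂) (hy : y₁ ≤ y₂) (h₁ : x₁ < y₁) (h₂ : x₂ < y₂) :
    slope f x₁ y₁ ≤ slope f x₂ y₂ :=
  calc slope f x₁ y₁
      ≤ slope f x₁ y₂ := hf.slope_mono hx₁ ⟨hy₁, h₁.ne'⟩ ⟨hy₂, (h₁.trans_le hy).ne'⟩ hy
    _ = slope f y₂ x₁ := slope_comm f x₁ y₂
    _ ≤ slope f y₂ x₂ := hf.slope_mono hy₂ ⟨hx₁, (h₁.trans_le hy).ne⟩ ⟨hx₂, h₂.ne⟩ hx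
    _ = slope f x₂ y₂ := slope_comm f y₂ x₂

end

/-- Selling side: if the noisy state is at least `γ` above the target and the trader
sells at least `γ` shares without crossing the target, the market maker's expected
loss is at least the Bregman divergence `D_C(q* + γ, q*)`. -/
theorem sell_loss_lower_bound (C : ℝ → ℝ)
    (hconv : ConvexOn ℝ Set.univ C) (hdiff : Differentiable ℝ C)
    (qstar γ q' x : ℝ) (hγ : 0 < γ)
    (hq' : q' ≥ qstar + γ) (hx : x ≤ -γ) (hqx : q' + x ≥ qstar) :
    deriv C qstar * x - C (q' + x) + C q' ≥
      C (qstar + γ) - C qstar - deriv C qstar * ((qstar + γ) - qstar) := by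
  set m := deriv C qstar
  have hm : m ≤ slope C qstar (qstar + γ) :=
    hconv.deriv_le_slope trivial trivial (by linarith) (hdiff qstar)
  have hslope : slope C qstar (qstar + γ) ≤ slope C (q' + x) q' :=
    hconv.slope_le_slope trivial trivial trivial trivial hqx hq' (by linarith) (by linarith)
  have hinc₁ := sub_smul_slope C qstar (qstar + γ)
  have hinc₂ := sub_smul_slope C (q' + x) q'
  simp only [add_sub_cancel_left, sub_add_cancel_left, smul_eq_mul, vsub_eq_sub] at hinc₁ hinc₂
  calc C (qstar + γ) - C qstar - m * ((qstar + γ) - qstar)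
      = γ * (slope C qstar (qstar + γ) - m) := by linear_combination -hinc₁
    _ ≤ -x * (slope C (q' + x) q' - m) :=
        mul_le_mul (by linarith) (by linarith) (sub_nonneg.mpr hm) (by linarith)
    _ = m * x - C (q' + x) + C q' := by linear_combination hinc₂
end

section
/- Let q* ∈ ℝ, γ > 0, and let C be convex and differentiable. If q' ≤ q* - γ and x satisfies x ≥ γ and q' + x ≤ q*, then C'(q*)·x - C(q' + x) + C(q') ≥ D_C(q* - γ, q*), where D_C is the Bregman divergence of C. -/
/-!
Write `b = q' + x`. Convexity makes increments over intervals of length `γ` grow to the right, so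
`C b - C (b - γ) ≤ C q* - C (q* - γ)` as `b ≤ q*`; and on `[q', b - γ] ⊆ (-∞, q*]` the secant slope of
`C` is at most `C'(q*)`. Adding the two bounds gives the claim.
-/

open Set

theorem ConvexOn.apply_add_apply_le_of_mem_Icc {𝕜 : Type*} [Field 𝕜] [LinearOrder 𝕜]
    [IsStrictOrderedRing 𝕜] {s : Set 𝕜} {f : 𝕜 → 𝕜} (hf : ConvexOn 𝕜 s f) {x y x' y' : 𝕜}
    (hx : x ∈ s) (hy' : y' ∈ s) (hy : y ∈ Icc x y') (hx' : x' ∈ Icc x y') (hsum : x + y' = y + x') :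
    f y + f x' ≤ f x + f y' := by
  rcases (hy.1.trans hy.2).eq_or_lt with rfl | hlt
  · obtain rfl : y = x := le_antisymm hy.2 hy.1
    obtain rfl : x' = y := le_antisymm hx'.2 hx'.1
    rfl
  have hpos : 0 < y' - x := sub_pos.2 hlt
  -- `y` and `x'` are the convex combinations of `x` and `y'` with swapped weights
  set a := (y' - y) / (y' - x)
  set b := (y - x) / (y' - x)
  have ha : 0 ≤ a := div_nonneg (sub_nonneg.2 hy.2) hpos.le
  have hb : 0 ≤ b := div_nonneg (sub_nonneg.2 hy.1) hpos.le
  have hab : a + b = 1 := by rw [← add_div, div_eq_one_iff_eq hpos.ne']; ring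
  have hy_eq : a • x + b • y' = y := by simp only [a, b, smul_eq_mul]; field_simp; ring
  have hx'_eq : b • x + a • y' = x' := by
    simp only [a, b, smul_eq_mul]; field_simp; linear_combination (y' - x) * hsum
  have h₁ := hf.2 hx hy' ha hb hab
  have h₂ := hf.2 hx hy' hb ha (by rw [add_comm, hab])
  rw [hy_eq] at h₁
  rw [hx'_eq] at h₂
  simp only [smul_eq_mul] at h₁ h₂
  linear_combination h₁ + h₂ + (f x + f y') * hab

theorem ConvexOn.sub_le_deriv_mul_sub {S : Set ℝ} {f : ℝ → ℝ} (hf : ConvexOn ℝ S f)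
    (hd : ∀ x ∈ S, DifferentiableAt ℝ f x) {a c d : ℝ} (ha : a ∈ S) (hc : c ∈ S) (hd' : d ∈ S)
    (hac : a ≤ c) (hcd : c ≤ d) : f c - f a ≤ deriv f d * (c - a) := by
  rcases hac.eq_or_lt with rfl | hlt
  · simp
  have hslope : slope f a c ≤ deriv f c := hf.slope_le_deriv ha hc hlt (hd c hc)
  have hmono : deriv f c ≤ deriv f d := hf.monotoneOn_deriv hd hc hd' hcd
  rw [slope_def_field, div_le_iff₀ (sub_pos.2 hlt)] at hslope
  exact hslope.trans (mul_le_mul_of_nonneg_right hmono (sub_pos.2 hlt).le)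

theorem buy_loss_lower_bound_general (C : ℝ → ℝ)
    (hconv : ConvexOn ℝ Set.univ C) (hdiff : Differentiable ℝ C)
    (qstar γ q' x : ℝ) (hγ : 0 < γ)
    (hx : x ≥ γ) (hqx : q' + x ≤ qstar) :
    deriv C qstar * x - C (q' + x) + C q' ≥
      C (qstar - γ) - C qstar - deriv C qstar * ((qstar - γ) - qstar) := by
  have hincr : C (q' + x) + C (qstar - γ) ≤ C (q' + x - γ) + C qstar :=
    hconv.apply_add_apply_le_of_mem_Icc trivial trivial
      ⟨by linarith, hqx⟩ ⟨by linarith, by linarith⟩ (by ring)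
  have hsecant : C (q' + x - γ) - C q' ≤ deriv C qstar * (q' + x - γ - q') :=
    hconv.sub_le_deriv_mul_sub (fun y _ => hdiff y) trivial trivial trivial
      (by linarith) (by linarith)
  linear_combination hincr + hsecant

/-- Buying side: if the noisy state is at least `γ` below the target and the trader
buys at least `γ` shares without crossing the target, the market maker's expected
loss is at least the Bregman divergence `D_C(q* - γ, q*)`. -/
theorem buy_loss_lower_bound (C : ℝ → ℝ)
    (hconv : ConvexOn ℝ Set.univ C) (hdiff : Differentiable ℝ C)
    (qstar γ q' x : ℝ) (hγ : 0 < γ)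
    (hq' : q' ≤ qstar - γ) (hx : x ≥ γ) (hqx : q' + x ≤ qstar) :
    deriv C qstar * x - C (q' + x) + C q' ≥
      C (qstar - γ) - C qstar - deriv C qstar * ((qstar - γ) - qstar) :=
  buy_loss_lower_bound_general C hconv hdiff qstar γ q' x hγ hx hqx
end
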